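/- Let (C•, ∂) be a finite complex of finite dimensional complex vector spaces with chirality operator Γ (d odd), B = Γ∂ + ∂Γ the odd signature operator, and λ ≥ 0 such that B² has no eigenvalue of modulus in the relevant boundary. If 0 is not an eigenvalue of B restricted to a B²-spectral subspace C•_I (I an interval with 0 ∉ I), then C^k_I = C^k_{+,I} ⊕ C^k_{−,I}, where C^k_{+,I} = ker(∂Γ) ∩ C^k_I and C^k_{−,I} = ker(∂) ∩ C^k_I. -/
import Mathlib


/-- Let `B = Γ∂ + ∂Γ` be the odd signature operator of a finite
dimensional complex with chirality `Γ`, and let `W` be a `∂`- and `Γ`-invariant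
spectral subspace of `B²` on which `B` (equivalently `B²`) has no kernel (this is the
subspace `C•_I` for an interval `I` with `0 ∉ I`).  Then every element of `W`
decomposes uniquely as a sum of an element of `ker(∂Γ) ∩ W` and an element of
`ker(∂) ∩ W`, i.e. `C_I = C_{+,I} ⊕ C_{−,I}`. -/
theorem spectral_subspace_plus_minus_decomposition (V : Type*) [AddCommGroup V]
    [Module ℂ V] [FiniteDimensional ℂ V]
    (δ Γ : Module.End ℂ V) (hδ : δ * δ = 0) (hΓ : Γ * Γ = 1)
    (W : Submodule ℂ V)
    (hWδ : ∀ x ∈ W, δ x ∈ W) (hWΓ : ∀ x ∈ W, Γ x ∈ W)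
    (h0 : ∀ x ∈ W, (Γ * δ + δ * Γ) x = 0 → x = 0) :
    (∀ x ∈ W, ∃ y z, y ∈ W ∧ z ∈ W ∧ (δ * Γ) y = 0 ∧ δ z = 0 ∧ x = y + z) ∧
    (∀ x ∈ W, (δ * Γ) x = 0 → δ x = 0 → x = 0) := by
  set B : Module.End ℂ V := Γ * δ + δ * Γ with hBdef
  have hBW : ∀ x ∈ W, B x ∈ W := by
    intro x hx
    simp only [hBdef, LinearMap.add_apply, Module.End.mul_apply]
    exact W.add_mem (hWΓ _ (hWδ _ hx)) (hWδ _ (hWΓ _ hx))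
  have hΓΓ : ∀ v : V, Γ (Γ v) = v := by
    intro v
    have := LinearMap.congr_fun hΓ v
    simpa using this
  have hδδ : ∀ v : V, δ (δ v) = 0 := by
    intro v
    have := LinearMap.congr_fun hδ v
    simpa using this
  let Br : W →ₗ[ℂ] W := B.restrict hBW
  have hinj : Function.Injective Br := by
    intro a b hab
    have h1 : B (a.1 - b.1) = 0 := by
      have : B a.1 = B b.1 := congrArg Subtype.val hab
      rw [map_sub, this, sub_self]
    have h2 : a.1 - b.1 = 0 := h0 _ (W.sub_mem a.2 b.2) h1
    exact Subtype.ext (sub_eq_zero.mp h2)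
  have hsurj : Function.Surjective Br := LinearMap.injective_iff_surjective.mp hinj
  constructor
  · intro x hx
    obtain ⟨w, hw⟩ := hsurj ⟨x, hx⟩
    have hw' : Γ (δ w.1) + δ (Γ w.1) = x := by
      have : B w.1 = x := congrArg Subtype.val hw
      simpa [hBdef, LinearMap.add_apply, Module.End.mul_apply] using this
    refine ⟨Γ (δ w.1), δ (Γ w.1), hWΓ _ (hWδ _ w.2), hWδ _ (hWΓ _ w.2), ?_, ?_, hw'.symm⟩
    · simp only [Module.End.mul_apply]
      rw [hΓΓ, hδδ]
    · exact hδδ _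
  · intro x hx h1 h2
    apply h0 _ hx
    simp only [Module.End.mul_apply] at h1
    simp only [hBdef, LinearMap.add_apply, Module.End.mul_apply, h1, h2, map_zero, add_zero]
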